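/- arXiv:1902.10587 — 6 statements merged into one kernel-verified Lean document; each statement's English description precedes it below -/
import Mathlib

section
/- For n ≥ 3 and λ ∈ (0,1), the quantity a_λ = (1/n)·λ·((λ^{n-2}-1)/(n-2))·((1+λ)/(1+λ^{n-1})) + (1/(2n))·(1-λ²) is strictly positive. -/
/-!
Write `m = n - 2`. Clearing the positive denominators, positivity amounts to
`2 l (1 - l^m) < m (1 - l) (1 + l^(m+1))`, and after dividing by `1 - l` to
`2 (l + l^2 + ⋯ + l^m) < m (1 + l^(m+1))`. Pairing `l^k` with `l^(m+1-k)`, this is the sum over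
`k = 1, …, m` of `l^k + l^(m+1-k) < 1 + l^(m+1)`, i.e. of `(1 - l^k) (1 - l^(m+1-k)) > 0`.
-/

open Finset

lemma pow_add_pow_lt_one_add_pow {l : ℝ} (h0 : 0 < l) (h1 : l < 1) {i j : ℕ} (hi : i ≠ 0)
    (hj : j ≠ 0) : l ^ i + l ^ j < 1 + l ^ (i + j) := by
  have hli : l ^ i < 1 := pow_lt_one₀ h0.le h1 hi
  have hlj : l ^ j < 1 := pow_lt_one₀ h0.le h1 hj
  have : 0 < (1 - l ^ i) * (1 - l ^ j) := mul_pos (sub_pos.2 hli) (sub_pos.2 hlj)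
  rw [pow_add]
  linarith

lemma two_mul_sum_pow_succ_lt {l : ℝ} (h0 : 0 < l) (h1 : l < 1) {m : ℕ} (hm : m ≠ 0) :
    2 * ∑ k ∈ range m, l ^ (k + 1) < m * (1 + l ^ (m + 1)) := by
  have hreflect : ∑ k ∈ range m, l ^ (k + 1) = ∑ k ∈ range m, l ^ (m - k) := by
    rw [← sum_range_reflect]
    refine sum_congr rfl fun k hk => ?_
    rw [mem_range] at hk
    congr 1
    omega
  calc 2 * ∑ k ∈ range m, l ^ (k + 1)
      = ∑ k ∈ range m, (l ^ (k + 1) + l ^ (m - k)) := by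
        rw [sum_add_distrib, ← hreflect, two_mul]
    _ < ∑ _k ∈ range m, (1 + l ^ (m + 1)) := by
        refine sum_lt_sum_of_nonempty (nonempty_range_iff.2 hm) fun k hk => ?_
        rw [mem_range] at hk
        have hsum : k + 1 + (m - k) = m + 1 := by omega
        simpa only [hsum] using
          pow_add_pow_lt_one_add_pow h0 h1 (Nat.succ_ne_zero k) (Nat.sub_ne_zero_of_lt hk)
    _ = m * (1 + l ^ (m + 1)) := by rw [sum_const, card_range, nsmul_eq_mul]

lemma two_mul_mul_one_sub_pow_lt {l : ℝ} (h0 : 0 < l) (h1 : l < 1) {m : ℕ} (hm : m ≠ 0) :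
    2 * l * (1 - l ^ m) < m * (1 - l) * (1 + l ^ (m + 1)) := by
  have hgeom : l * (1 - l ^ m) = (1 - l) * ∑ k ∈ range m, l ^ (k + 1) := by
    have hshift : ∑ k ∈ range m, l ^ (k + 1) = l * ∑ k ∈ range m, l ^ k := by
      simp only [pow_succ', mul_sum]
    rw [hshift]
    linear_combination l * geom_sum_mul l m
  calc 2 * l * (1 - l ^ m) = (1 - l) * (2 * ∑ k ∈ range m, l ^ (k + 1)) := by
        rw [mul_assoc, hgeom]; ring
    _ < (1 - l) * (m * (1 + l ^ (m + 1))) :=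
        mul_lt_mul_of_pos_left (two_mul_sum_pow_succ_lt h0 h1 hm) (sub_pos.2 h1)
    _ = m * (1 - l) * (1 + l ^ (m + 1)) := by ring

theorem stmt0 (n : ℕ) (hn : 3 ≤ n) (l : ℝ) (hl : l ∈ Set.Ioo (0:ℝ) 1) :
    0 < (1 / n : ℝ) * l * ((l ^ (n - 2) - 1) / (n - 2)) * ((1 + l) / (1 + l ^ (n - 1)))
      + (1 / (2 * n)) * (1 - l ^ 2) := by
  obtain ⟨h0, h1⟩ := hl
  obtain ⟨m, rfl⟩ : ∃ m, n = m + 2 := ⟨n - 2, by omega⟩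
  have hm : m ≠ 0 := by omega
  rw [show m + 2 - 2 = m by omega, show m + 2 - 1 = m + 1 by omega]
  push_cast
  rw [add_sub_cancel_right]
  have hkey := two_mul_mul_one_sub_pow_lt h0 h1 hm
  have hmpos : (0 : ℝ) < m := by positivity
  have hq : 0 < 1 + l ^ (m + 1) := by positivity
  have hfrac : (1 / ((m : ℝ) + 2)) * l * ((l ^ m - 1) / m) * ((1 + l) / (1 + l ^ (m + 1)))
      + (1 / (2 * ((m : ℝ) + 2))) * (1 - l ^ 2)
      = (1 + l) * (m * (1 - l) * (1 + l ^ (m + 1)) - 2 * l * (1 - l ^ m))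
        / (2 * ((m : ℝ) + 2) * (m * (1 + l ^ (m + 1)))) := by
    field_simp
    ring
  rw [hfrac]
  exact div_pos (mul_pos (by linarith) (by linarith)) (by positivity)
end

section
/- Let n ≥ 2, k > 1, λ ∈ (0,1), α = n/2 + k - 1, ω = -α·log λ, C = α(λ+1)·coth ω + (n/2)(λ-1), D = α² - n²/4. Then C'(λ)·(√(C²-4λD) + C) - 2D > 0, where C'(λ) = α·coth ω + ((1+λ)/λ)·α²/sinh²ω + n/2. -/
/-!
Write `S = √(C² - 4lD)`. Since `(C - S)(C + S) = 4lD` and `C + S > 0`, the claim says that `C'`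
exceeds the smaller root `(C - S)/(2l)` of `l x² - C x + D`, i.e. `C - 2lC' < S`. In terms of
`t = coth ω > 1`, with `csch² ω = t² - 1` and `m = n/2 < α`, the discriminant `S²` is a square
plus `4lα²(t² - 1) > 0`, and `S² - (C - 2lC')²` factors as
`4B(l + (1 + l)(C - 2lC') + (1 + l)²B)` with `B = α²(t² - 1) > 0`, which is positive whenever
`C - 2lC' ≥ 0`.
-/

open Real

lemma two_mul_lt_mul_sqrt_discrim_add {l C D C' : ℝ} (hl : 0 < l) (hC : 0 < C)
    (hdisc : 0 ≤ C ^ 2 - 4 * l * D) (hroot : C - 2 * l * C' < √(C ^ 2 - 4 * l * D)) :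
    2 * D < C' * (√(C ^ 2 - 4 * l * D) + C) := by
  set S := √(C ^ 2 - 4 * l * D)
  have hS2 : S ^ 2 = C ^ 2 - 4 * l * D := sq_sqrt hdisc
  have hCS : 0 < C + S := by positivity
  have hmul : (C - S) * (C + S) < 2 * l * C' * (C + S) :=
    mul_lt_mul_of_pos_right (by linarith) hCS
  have h4lD : (2 * l) * (2 * D) < (2 * l) * (C' * (S + C)) := by nlinarith
  exact lt_of_mul_lt_mul_left h4lD (by positivity)

section CothForm

variable {l m α t C D C' : ℝ}

lemma pos_of_coth_form (hl : 0 < l) (hm : 0 ≤ m) (hmα : m < α) (ht : 1 < t)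
    (hC : C = α * (l + 1) * t + m * (l - 1)) : 0 < C := by
  have hαt : α < α * t := lt_mul_of_one_lt_right (by linarith) ht
  have hml : 0 ≤ m * l := by positivity
  nlinarith

lemma discrim_eq_of_coth_form (hC : C = α * (l + 1) * t + m * (l - 1)) (hD : D = α ^ 2 - m ^ 2) :
    C ^ 2 - 4 * l * D = (α * t * (1 - l) - m * (1 + l)) ^ 2 + 4 * l * (α ^ 2 * (t ^ 2 - 1)) := by
  subst hC hD; ring

lemma sub_two_mul_lt_sqrt_discrim_of_coth_form (hl : 0 < l) (hm : 0 ≤ m) (hmα : m < α)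
    (ht : 1 < t) (hC : C = α * (l + 1) * t + m * (l - 1)) (hD : D = α ^ 2 - m ^ 2)
    (hC' : C' = α * t + (1 + l) / l * (α ^ 2 * (t ^ 2 - 1)) + m) :
    C - 2 * l * C' < √(C ^ 2 - 4 * l * D) := by
  set B := α ^ 2 * (t ^ 2 - 1)
  have hB : 0 < B := mul_pos (by nlinarith) (by nlinarith)
  set R := C - 2 * l * C'
  rcases lt_or_ge R 0 with hR | hR
  · exact hR.trans_le (sqrt_nonneg _)
  have hR_eq : R = α * t * (1 - l) - m * (1 + l) - 2 * (1 + l) * B := by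
    simp only [R, hC, hC']; field_simp; ring
  have hfactor : (C ^ 2 - 4 * l * D) - R ^ 2 = 4 * (B * (l + (1 + l) * R + (1 + l) ^ 2 * B)) := by
    rw [discrim_eq_of_coth_form hC hD, hR_eq]; ring
  have hpos : 0 < B * (l + (1 + l) * R + (1 + l) ^ 2 * B) := by positivity
  exact lt_sqrt_of_sq_lt (by linarith)

lemma two_mul_lt_mul_sqrt_discrim_add_of_coth_form (hl : 0 < l) (hm : 0 ≤ m) (hmα : m < α)
    (ht : 1 < t) (hC : C = α * (l + 1) * t + m * (l - 1)) (hD : D = α ^ 2 - m ^ 2)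
    (hC' : C' = α * t + (1 + l) / l * (α ^ 2 * (t ^ 2 - 1)) + m) :
    2 * D < C' * (√(C ^ 2 - 4 * l * D) + C) := by
  have hdisc : 0 ≤ C ^ 2 - 4 * l * D := by
    rw [discrim_eq_of_coth_form hC hD]
    have : 0 ≤ α ^ 2 * (t ^ 2 - 1) := mul_nonneg (sq_nonneg α) (by nlinarith)
    positivity
  exact two_mul_lt_mul_sqrt_discrim_add hl (pos_of_coth_form hl hm hmα ht hC) hdisc
    (sub_two_mul_lt_sqrt_discrim_of_coth_form hl hm hmα ht hC hD hC')

end CothForm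

lemma one_lt_cosh_div_sinh {x : ℝ} (hx : 0 < x) : 1 < cosh x / sinh x :=
  (one_lt_div (sinh_pos_iff.mpr hx)).mpr (sinh_lt_cosh x)

lemma inv_sinh_sq_eq {x : ℝ} (hx : 0 < x) : 1 / sinh x ^ 2 = (cosh x / sinh x) ^ 2 - 1 := by
  have := (sinh_pos_iff.mpr hx).ne'
  field_simp
  linarith [cosh_sq x]

theorem stmt7_general (n : ℕ) (k l α ω C D C' : ℝ) (hk : 1 < k)
    (hl : l ∈ Set.Ioo (0:ℝ) 1)
    (hα : α = n/2 + k - 1) (hω : ω = -α * Real.log l)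
    (hC : C = α * (l + 1) * (Real.cosh ω / Real.sinh ω) + (n/2) * (l - 1))
    (hD : D = α^2 - n^2/4)
    (hC' : C' = α * (Real.cosh ω / Real.sinh ω) + ((1 + l)/l) * α^2 / (Real.sinh ω)^2 + n/2) :
    0 < C' * (Real.sqrt (C^2 - 4*l*D) + C) - 2*D := by
  obtain ⟨hl0, hl1⟩ := hl
  have hm : (0 : ℝ) ≤ n / 2 := by positivity
  have hmα : (n : ℝ) / 2 < α := by linarith
  have hω0 : 0 < ω := by
    rw [hω, neg_mul, ← mul_neg]
    exact mul_pos (by linarith) (neg_pos.mpr (log_neg hl0 hl1))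
  have hC'' : C' = α * (cosh ω / sinh ω) + (1 + l) / l * (α ^ 2 * ((cosh ω / sinh ω) ^ 2 - 1))
      + n / 2 := by
    rw [hC', ← inv_sinh_sq_eq hω0]; ring
  have hD' : D = α ^ 2 - (n / 2 : ℝ) ^ 2 := by rw [hD]; ring
  have key := two_mul_lt_mul_sqrt_discrim_add_of_coth_form hl0 hm hmα
    (one_lt_cosh_div_sinh hω0) hC hD' hC''
  linarith

theorem stmt7 (n : ℕ) (hn : 2 ≤ n) (k l α ω C D C' : ℝ) (hk : 1 < k)
    (hl : l ∈ Set.Ioo (0:ℝ) 1)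
    (hα : α = n/2 + k - 1) (hω : ω = -α * Real.log l)
    (hC : C = α * (l + 1) * (Real.cosh ω / Real.sinh ω) + (n/2) * (l - 1))
    (hD : D = α^2 - n^2/4)
    (hC' : C' = α * (Real.cosh ω / Real.sinh ω) + ((1 + l)/l) * α^2 / (Real.sinh ω)^2 + n/2) :
    0 < C' * (Real.sqrt (C^2 - 4*l*D) + C) - 2*D :=
  stmt7_general n k l α ω C D C' hk hl hα hω hC hD hC'
end

section
/- For n ≥ 2 and k > 1, μ_{k,1}(λ) → k - 1 as λ → 0⁺ and μ_{k,1}(λ) → -∞ as λ → 1⁻, where μ_{k,1}(λ) = 2D/(C + √(C²-4λD)) - n(1+λ^{n-1})/(1-λⁿ) with α = n/2+k-1, ω = -α log λ, C = α(λ+1)coth ω + (n/2)(λ-1), D = (n+k-1)(k-1). -/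
/-! As `λ → 0⁺` we have `ω → ∞`, so `coth ω → 1` and `C → α - n/2 = k - 1`; the first
term of `μ` then tends to `D/(k-1) = n + k - 1` and the second to `n`. As `λ → 1⁻` we have
`ω → 0⁺`, so `coth ω` and with it `C` blow up, killing the first term, while
`n(1+λ^(n-1))/(1-λⁿ) → +∞`. -/

open Filter Real Set Topology

lemma Real.tendsto_sinh_atTop : Tendsto sinh atTop atTop :=
  tendsto_atTop_mono' atTop ((eventually_ge_atTop 0).mono fun _ hx => self_le_sinh_iff.2 hx)
    tendsto_id

lemma Real.tendsto_sinh_nhdsGT_zero : Tendsto sinh (𝓝[>] 0) (𝓝[>] 0) :=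
  tendsto_nhdsWithin_of_tendsto_nhds_of_eventually_within _
    (sinh_zero ▸ continuous_sinh.tendsto 0 |>.mono_left nhdsWithin_le_nhds)
    (eventually_nhdsWithin_of_forall fun _ hx => sinh_pos_iff.2 hx)

lemma Real.tendsto_cosh_div_sinh_atTop : Tendsto (fun x => cosh x / sinh x) atTop (𝓝 1) := by
  have h : Tendsto (fun x => 1 + exp (-x) / sinh x) atTop (𝓝 (1 + 0)) :=
    tendsto_const_nhds.add (tendsto_exp_neg_atTop_nhds_zero.div_atTop tendsto_sinh_atTop)
  rw [add_zero] at h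
  refine h.congr' ?_
  filter_upwards [eventually_gt_atTop 0] with x hx
  have : sinh x ≠ 0 := (sinh_pos_iff.2 hx).ne'
  rw [← cosh_sub_sinh]
  field_simp
  ring

lemma Real.tendsto_cosh_div_sinh_nhdsGT_zero :
    Tendsto (fun x => cosh x / sinh x) (𝓝[>] 0) atTop := by
  have hcosh : Tendsto cosh (𝓝[>] 0) (𝓝 1) :=
    cosh_zero ▸ continuous_cosh.tendsto 0 |>.mono_left nhdsWithin_le_nhds
  have hinv : Tendsto (fun x => (sinh x)⁻¹) (𝓝[>] 0) atTop :=
    tendsto_inv_nhdsGT_zero.comp tendsto_sinh_nhdsGT_zero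
  simpa only [div_eq_mul_inv] using hcosh.pos_mul_atTop one_pos hinv

lemma tendsto_neg_mul_log_nhdsGT_zero {α : ℝ} (hα : 0 < α) :
    Tendsto (fun l => -α * log l) (𝓝[>] 0) atTop :=
  tendsto_log_nhdsGT_zero.const_mul_atBot_of_neg (neg_neg_of_pos hα)

lemma tendsto_neg_mul_log_nhdsLT_one {α : ℝ} (hα : 0 < α) :
    Tendsto (fun l => -α * log l) (𝓝[<] 1) (𝓝[>] 0) := by
  refine tendsto_nhdsWithin_of_tendsto_nhds_of_eventually_within _ ?_ ?_
  · simpa using ((continuousAt_log one_ne_zero).tendsto.const_mul (-α)).mono_left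
      nhdsWithin_le_nhds
  · filter_upwards [Ioo_mem_nhdsLT zero_lt_one] with l hl
    exact mul_pos_of_neg_of_neg (neg_neg_of_pos hα) (log_neg hl.1 hl.2)

lemma tendsto_mul_coth_neg_mul_log_add_nhdsGT_zero {α : ℝ} (hα : 0 < α) (β : ℝ) :
    Tendsto (fun l => α * (l + 1) * (cosh (-α * log l) / sinh (-α * log l)) + β * (l - 1))
      (𝓝[>] 0) (𝓝 (α - β)) := by
  have h1 : Tendsto (fun l : ℝ => α * (l + 1)) (𝓝[>] 0) (𝓝 (α * (0 + 1))) :=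
    (Continuous.tendsto (by fun_prop) 0).mono_left nhdsWithin_le_nhds
  have h2 : Tendsto (fun l : ℝ => β * (l - 1)) (𝓝[>] 0) (𝓝 (β * (0 - 1))) :=
    (Continuous.tendsto (by fun_prop) 0).mono_left nhdsWithin_le_nhds
  have h :=
    (h1.mul (tendsto_cosh_div_sinh_atTop.comp (tendsto_neg_mul_log_nhdsGT_zero hα))).add h2
  rwa [show α * (0 + 1) * 1 + β * (0 - 1) = α - β by ring] at h

lemma tendsto_mul_coth_neg_mul_log_add_nhdsLT_one {α : ℝ} (hα : 0 < α) (β : ℝ) :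
    Tendsto (fun l => α * (l + 1) * (cosh (-α * log l) / sinh (-α * log l)) + β * (l - 1))
      (𝓝[<] 1) atTop := by
  have h1 : Tendsto (fun l : ℝ => α * (l + 1)) (𝓝[<] 1) (𝓝 (α * (1 + 1))) :=
    (Continuous.tendsto (by fun_prop) 1).mono_left nhdsWithin_le_nhds
  have h2 : Tendsto (fun l : ℝ => β * (l - 1)) (𝓝[<] 1) (𝓝 (β * (1 - 1))) :=
    (Continuous.tendsto (by fun_prop) 1).mono_left nhdsWithin_le_nhds
  exact (h1.pos_mul_atTop (by positivity)
    (tendsto_cosh_div_sinh_nhdsGT_zero.comp (tendsto_neg_mul_log_nhdsLT_one hα))).atTop_add h2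

lemma tendsto_two_mul_div_add_sqrt_sq_sub {ι : Type*} {f : Filter ι} {C x : ι → ℝ} {c : ℝ}
    (hc : 0 < c) (hC : Tendsto C f (𝓝 c)) (hx : Tendsto x f (𝓝 0)) (D : ℝ) :
    Tendsto (fun i => 2 * D / (C i + sqrt (C i ^ 2 - 4 * x i * D))) f (𝓝 (D / c)) := by
  have hsqrt :
      Tendsto (fun i => sqrt (C i ^ 2 - 4 * x i * D)) f (𝓝 (sqrt (c ^ 2 - 4 * 0 * D))) :=
    ((hC.pow 2).sub ((hx.const_mul 4).mul_const D)).sqrt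
  rw [mul_zero, zero_mul, sub_zero, sqrt_sq hc.le] at hsqrt
  have h := (tendsto_const_nhds (x := 2 * D)).div (hC.add hsqrt) (by positivity)
  rwa [show 2 * D / (c + c) = D / c by field_simp; ring] at h

lemma tendsto_div_add_sqrt_of_tendsto_atTop {ι : Type*} {f : Filter ι} {C g : ι → ℝ}
    (hC : Tendsto C f atTop) (a : ℝ) :
    Tendsto (fun i => a / (C i + sqrt (g i))) f (𝓝 0) :=
  tendsto_const_nhds.div_atTop
    (tendsto_atTop_mono (fun _ => le_add_of_nonneg_right (sqrt_nonneg _)) hC)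

lemma tendsto_mul_one_add_pow_div_one_sub_pow_nhds_zero (c : ℝ) {n : ℕ} (hn : 2 ≤ n) :
    Tendsto (fun l : ℝ => c * (1 + l ^ (n - 1)) / (1 - l ^ n)) (𝓝 0) (𝓝 c) := by
  have h : ContinuousAt (fun l : ℝ => c * (1 + l ^ (n - 1)) / (1 - l ^ n)) 0 :=
    by fun_prop (disch := simp [zero_pow (by omega : n ≠ 0)])
  simpa [zero_pow (by omega : n ≠ 0), zero_pow (by omega : n - 1 ≠ 0)] using h.tendsto

lemma tendsto_mul_one_add_pow_div_one_sub_pow_nhdsLT_one {c : ℝ} (hc : 0 < c) {n : ℕ}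
    (hn : n ≠ 0) :
    Tendsto (fun l : ℝ => c * (1 + l ^ (n - 1)) / (1 - l ^ n)) (𝓝[<] 1) atTop := by
  have hnum :
      Tendsto (fun l : ℝ => c * (1 + l ^ (n - 1))) (𝓝[<] 1) (𝓝 (c * (1 + 1 ^ (n - 1)))) :=
    (Continuous.tendsto (by fun_prop) 1).mono_left nhdsWithin_le_nhds
  have hden : Tendsto (fun l : ℝ => 1 - l ^ n) (𝓝[<] 1) (𝓝[>] 0) := by
    refine tendsto_nhdsWithin_of_tendsto_nhds_of_eventually_within _ ?_ ?_
    · simpa using (Continuous.tendsto (by fun_prop : Continuous fun l : ℝ => 1 - l ^ n) 1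
        |>.mono_left nhdsWithin_le_nhds)
    · filter_upwards [Ioo_mem_nhdsLT zero_lt_one] with l hl
      exact sub_pos.2 (pow_lt_one₀ hl.1.le hl.2 hn)
  have hinv : Tendsto (fun l : ℝ => (1 - l ^ n)⁻¹) (𝓝[<] 1) atTop :=
    tendsto_inv_nhdsGT_zero.comp hden
  simpa only [div_eq_mul_inv] using hnum.pos_mul_atTop (by norm_num; positivity) hinv

theorem stmt9 (n : ℕ) (hn : 2 ≤ n) (k : ℝ) (hk : 1 < k) (α : ℝ) (hα : α = n/2 + k - 1)
    (C : ℝ → ℝ)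
    (hC : ∀ l : ℝ, C l = α * (l + 1) * (Real.cosh (-α * Real.log l) / Real.sinh (-α * Real.log l)) + (n/2) * (l - 1))
    (D : ℝ) (hD : D = (n + k - 1) * (k - 1))
    (μ : ℝ → ℝ)
    (hμ : ∀ l : ℝ, μ l = 2*D / (C l + Real.sqrt ((C l)^2 - 4*l*D))
        - n * (1 + l^(n-1)) / (1 - l^n)) :
    Filter.Tendsto μ (nhdsWithin 0 (Set.Ioi 0)) (nhds (k - 1)) ∧
    Filter.Tendsto μ (nhdsWithin 1 (Set.Iio 1)) Filter.atBot := by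
  have hn' : (2 : ℝ) ≤ n := by exact_mod_cast hn
  have hα_pos : 0 < α := by rw [hα]; linarith
  have hk₁ : k - 1 ≠ 0 := (sub_pos.2 hk).ne'
  rw [funext hμ]
  constructor
  · have hC₀ : Tendsto C (𝓝[>] 0) (𝓝 (k - 1)) := by
      rw [funext hC, show k - 1 = α - n / 2 by rw [hα]; ring]
      exact tendsto_mul_coth_neg_mul_log_add_nhdsGT_zero hα_pos _
    have h := (tendsto_two_mul_div_add_sqrt_sq_sub (sub_pos.2 hk) hC₀
      (tendsto_id.mono_left nhdsWithin_le_nhds) D).sub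
      ((tendsto_mul_one_add_pow_div_one_sub_pow_nhds_zero n hn).mono_left nhdsWithin_le_nhds)
    rwa [show D / (k - 1) - n = k - 1 by rw [hD]; field_simp; ring] at h
  · have hC₁ : Tendsto C (𝓝[<] 1) atTop := by
      rw [funext hC]
      exact tendsto_mul_coth_neg_mul_log_add_nhdsLT_one hα_pos _
    have h := (tendsto_div_add_sqrt_of_tendsto_atTop (g := fun l => C l ^ 2 - 4 * l * D) hC₁
      (2 * D)).add_atBot (tendsto_neg_atTop_atBot.comp
        (tendsto_mul_one_add_pow_div_one_sub_pow_nhdsLT_one (c := n) (by linarith)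
          (by omega : n ≠ 0)))
    exact h.congr fun _ => (sub_eq_add_neg _ _).symm
end

section
/- For every ω > 0, the 2×2 symmetric real matrix with entries m₁₁ = (1/λ)(coth ω - ω/sinh²ω), m₂₂ = coth ω - ω/sinh²ω, and m₁₂ = m₂₁ = (1/√λ)(ω·cosh ω/sinh²ω - 1/sinh ω), where λ ∈ (0,1), is positive definite. -/
/-!
With `s = sinh ω`, `c = cosh ω`, the matrix is `!![A / l, B / √l; B / √l, A]` where
`A = (c s - ω) / s²` and `B = (ω c - s) / s²`, so it is positive definite as soon as `A > 0` and
`B² < A²`. Since `c² = 1 + s²`, the difference of squares factors as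
`(c s - ω)² - (ω c - s)² = (c² - 1)(s² - ω²) = s² (s² - ω²)`, which is positive because `ω < sinh ω`.
-/

open Real

theorem Matrix.posDef_fin_two_of_sq_lt {a b c : ℝ} (ha : 0 < a) (hb : b ^ 2 < a * c) :
    (!![a, b; b, c] : Matrix (Fin 2) (Fin 2) ℝ).PosDef := by
  rw [Matrix.posDef_iff_dotProduct_mulVec]
  refine ⟨by ext i j; fin_cases i <;> fin_cases j <;> rfl, fun x hx => ?_⟩
  simp only [star_trivial, dotProduct, Matrix.mulVec, Fin.sum_univ_two, Matrix.of_apply,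
    Matrix.cons_val', Matrix.cons_val_zero, Matrix.cons_val_one, Matrix.empty_val',
    Matrix.cons_val_fin_one]
  -- `a · (quadratic form) = (a x₀ + b x₁)² + (a c - b²) x₁²`
  suffices 0 < a * (x 0 * (a * x 0 + b * x 1) + x 1 * (b * x 0 + c * x 1)) from
    pos_of_mul_pos_right this ha.le
  rcases eq_or_ne (x 1) 0 with h1 | h1
  · have h0 : x 0 ≠ 0 := fun h0 => hx (by ext i; fin_cases i <;> assumption)
    simp only [h1, mul_zero, zero_mul, add_zero]
    exact mul_pos ha (by nlinarith [sq_pos_of_ne_zero h0])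
  · nlinarith [sq_nonneg (a * x 0 + b * x 1), sq_pos_of_ne_zero h1]

theorem sq_cosh_mul_sub_sub_sq {c s ω : ℝ} (hcs : c ^ 2 = 1 + s ^ 2) :
    (c * s - ω) ^ 2 - (ω * c - s) ^ 2 = s ^ 2 * (s ^ 2 - ω ^ 2) := by
  linear_combination (s ^ 2 - ω ^ 2) * hcs

section Serrin

variable {ω : ℝ}

theorem cosh_div_sinh_sub_div_sinh_sq_eq (hω : 0 < ω) :
    cosh ω / sinh ω - ω / sinh ω ^ 2 = (cosh ω * sinh ω - ω) / sinh ω ^ 2 := by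
  have := (sinh_pos_iff.mpr hω).ne'
  field_simp

theorem mul_cosh_div_sinh_sq_sub_inv_eq (hω : 0 < ω) :
    ω * cosh ω / sinh ω ^ 2 - 1 / sinh ω = (ω * cosh ω - sinh ω) / sinh ω ^ 2 := by
  have := (sinh_pos_iff.mpr hω).ne'
  field_simp

theorem self_lt_cosh_mul_sinh (hω : 0 < ω) : ω < cosh ω * sinh ω := by
  nlinarith [one_le_cosh ω, sinh_pos_iff.mpr hω, self_lt_sinh_iff.mpr hω]

theorem cosh_div_sinh_sub_div_sinh_sq_pos (hω : 0 < ω) :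
    0 < cosh ω / sinh ω - ω / sinh ω ^ 2 := by
  rw [cosh_div_sinh_sub_div_sinh_sq_eq hω]
  exact div_pos (sub_pos.mpr (self_lt_cosh_mul_sinh hω)) (pow_pos (sinh_pos_iff.mpr hω) 2)

theorem sq_mul_cosh_div_sinh_sq_sub_inv_lt (hω : 0 < ω) :
    (ω * cosh ω / sinh ω ^ 2 - 1 / sinh ω) ^ 2 < (cosh ω / sinh ω - ω / sinh ω ^ 2) ^ 2 := by
  rw [cosh_div_sinh_sub_div_sinh_sq_eq hω, mul_cosh_div_sinh_sq_sub_inv_eq hω, div_pow, div_pow]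
  have hs : 0 < sinh ω := sinh_pos_iff.mpr hω
  refine div_lt_div_of_pos_right ?_ (by positivity)
  have hgap : 0 < sinh ω ^ 2 * (sinh ω ^ 2 - ω ^ 2) :=
    mul_pos (by positivity) (sub_pos.mpr (pow_lt_pow_left₀ (self_lt_sinh_iff.mpr hω) hω.le two_ne_zero))
  linarith [sq_cosh_mul_sub_sub_sq (ω := ω) (cosh_sq' ω)]

end Serrin

theorem stmt10 (l ω : ℝ) (hl : l ∈ Set.Ioo (0:ℝ) 1) (hω : 0 < ω) :
    (!![(1/l) * ((Real.cosh ω / Real.sinh ω) - ω/(Real.sinh ω)^2),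
        (1/Real.sqrt l) * (ω * Real.cosh ω/(Real.sinh ω)^2 - 1/Real.sinh ω);
        (1/Real.sqrt l) * (ω * Real.cosh ω/(Real.sinh ω)^2 - 1/Real.sinh ω),
        (Real.cosh ω / Real.sinh ω) - ω/(Real.sinh ω)^2] : Matrix (Fin 2) (Fin 2) ℝ).PosDef := by
  have hl0 : 0 < l := hl.1
  have hA := cosh_div_sinh_sub_div_sinh_sq_pos hω
  apply Matrix.posDef_fin_two_of_sq_lt (mul_pos (one_div_pos.mpr hl0) hA)
  rw [mul_pow, div_pow, one_pow, sq_sqrt hl0.le, mul_assoc, ← sq]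
  exact mul_lt_mul_of_pos_left (sq_mul_cosh_div_sinh_sq_sub_inv_lt hω) (one_div_pos.mpr hl0)
end

section
/- For n ≥ 2 and λ ∈ (0,1), setting α = n/2 (i.e. k = 1) and ω = -(n/2) log λ, one has C := α(λ+1)·coth ω + (n/2)(λ-1) = n(λ + λⁿ)/(1 - λⁿ) = λ/c_λ and D := α² - n²/4 = 0; consequently the two eigenvalues of the linearized operator at degree k = 1 are μ_{1,1}(λ) = -1/c_λ < 0 and μ_{1,2}(λ) = 0, where c_λ = (1/n)(1-λⁿ)/(1+λ^{n-1}). -/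
/-! For `k = 1` one has `α = n/2`, so `D = α² - n²/4` vanishes and the discriminant is `C²`:
the two roots are `0` and `C/λ`. Writing `ω = -½ log λⁿ`, `coth ω = (1 + λⁿ)/(1 - λⁿ)`, which turns
`C` into `n(λ + λⁿ)/(1 - λⁿ)`; since `λ + λⁿ = λ(1 + λⁿ⁻¹)` this is `λ/c_λ`. Hence the shifted
eigenvalues are `-1/c_λ < 0` and `C/λ - 1/c_λ = 0`. -/

namespace Real

theorem cosh_div_sinh_eq (x : ℝ) :
    cosh x / sinh x = (exp (2 * x) + 1) / (exp (2 * x) - 1) := by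
  have hx : exp x ≠ 0 := (exp_pos x).ne'
  rw [cosh_eq, sinh_eq, div_div_div_cancel_right₀ two_ne_zero, exp_neg, two_mul, exp_add,
    ← mul_div_mul_left _ _ hx]
  congr 1 <;> field_simp

theorem cosh_div_sinh_neg_half_log {a : ℝ} (ha : 0 < a) :
    cosh (-(log a / 2)) / sinh (-(log a / 2)) = (1 + a) / (1 - a) := by
  rw [cosh_neg, sinh_neg, div_neg, cosh_div_sinh_eq, mul_div_cancel₀ _ two_ne_zero, exp_log ha,
    ← div_neg, neg_sub, add_comm]

end Real

open Real

theorem half_mul_coth_add_eq {n : ℕ} {l : ℝ} (hl : 0 < l) (hln : l ^ n ≠ 1) :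
    (n / 2) * (l + 1) * (cosh (-(n / 2) * log l) / sinh (-(n / 2) * log l)) + (n / 2) * (l - 1)
      = n * (l + l ^ n) / (1 - l ^ n) := by
  have hω : -(n / 2) * log l = -(log (l ^ n) / 2) := by rw [log_pow]; ring
  have h1 : (1 : ℝ) - l ^ n ≠ 0 := sub_ne_zero.mpr hln.symm
  rw [hω, cosh_div_sinh_neg_half_log (pow_pos hl n)]
  field_simp
  ring

theorem mul_add_pow_div_one_sub_pow_eq {n : ℕ} (hn : n ≠ 0) (l : ℝ) :
    n * (l + l ^ n) / (1 - l ^ n) = l / ((1 / n) * (1 - l ^ n) / (1 + l ^ (n - 1))) := by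
  obtain ⟨m, rfl⟩ := Nat.exists_eq_succ_of_ne_zero hn
  rw [div_div_eq_mul_div, one_div, inv_mul_eq_div, div_div_eq_mul_div, Nat.succ_sub_one, pow_succ']
  ring

theorem stmt12 (n : ℕ) (hn : 2 ≤ n) (l α ω C D c μ₁ μ₂ : ℝ)
    (hl : l ∈ Set.Ioo (0:ℝ) 1)
    (hα : α = n/2) (hω : ω = -(n/2) * Real.log l)
    (hC : C = α * (l + 1) * (Real.cosh ω / Real.sinh ω) + (n/2) * (l - 1))
    (hD : D = α^2 - n^2/4)
    (hc : c = (1/n) * (1 - l^n) / (1 + l^(n-1)))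
    (hμ₁ : μ₁ = (C - Real.sqrt (C^2 - 4*l*D)) / (2*l) - 1/c)
    (hμ₂ : μ₂ = (C + Real.sqrt (C^2 - 4*l*D)) / (2*l) - 1/c) :
    C = n * (l + l^n) / (1 - l^n) ∧ C = l / c ∧ D = 0 ∧
    μ₁ = -1/c ∧ μ₁ < 0 ∧ μ₂ = 0 := by
  obtain ⟨hl0, hl1⟩ := hl
  have hn0 : n ≠ 0 := by omega
  have hln : l ^ n < 1 := pow_lt_one₀ hl0.le hl1 hn0
  have hC₁ : C = n * (l + l ^ n) / (1 - l ^ n) := by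
    rw [hC, hα, hω, half_mul_coth_add_eq hl0 hln.ne]
  have hC₂ : C = l / c := by rw [hC₁, hc, mul_add_pow_div_one_sub_pow_eq hn0]
  have hD₀ : D = 0 := by rw [hD, hα]; ring
  have hc₀ : 0 < c := by
    rw [hc]
    have := pow_pos hl0 (n - 1)
    exact div_pos (mul_pos (by positivity) (by linarith)) (by positivity)
  have hsqrt : √(C ^ 2 - 4 * l * D) = C := by
    rw [hD₀, mul_zero, sub_zero, sqrt_sq (hC₂ ▸ by positivity)]
  have hμ₁' : μ₁ = -1 / c := by rw [hμ₁, hsqrt, sub_self, zero_div, zero_sub, neg_div]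
  refine ⟨hC₁, hC₂, hD₀, hμ₁', hμ₁' ▸ div_neg_of_neg_of_pos (by norm_num) hc₀, ?_⟩
  rw [hμ₂, hsqrt, hC₂]
  field_simp
  ring
end

section
/- For fixed n ≥ 2 and λ ∈ (0,1), both eigenvalue branches k ↦ μ_{k,1}(λ) and k ↦ μ_{k,2}(λ) are strictly increasing in k ∈ (0,∞), where μ_{k,j}(λ) are the eigenvalues of the symmetric matrix M̃_{λ,k} - (1/c_λ)·Id with M̃_{λ,k} = [[(1/λ)(α coth ω - n/2), -α/(√λ sinh ω)], [-α/(√λ sinh ω), α coth ω + n/2]], α = n/2+k-1, ω = -α log λ, 1/c_λ = n(1+λ^{n-1})/(1-λⁿ). -/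
/-!
The eigenvalues of a real symmetric matrix `!![a, b; b, d]` are `(a + d ± √((a - d)² + (2b)²)) / 2`.
If the increment `N - M` of two such matrices is positive definite, the trace grows by more than
the norm of the increment of `(a - d, 2b)`, so by the reverse triangle inequality both eigenvalues
grow. Up to a constant diagonal matrix, `M̃_{λ,k}` is
`α • !![coth ω / λ, -1 / (√λ sinh ω); -1 / (√λ sinh ω), coth ω]` with `ω = α L`, `L = -log λ`,
and its increment between `0 < α₁ < α₂` is positive definite iff
`|Δ(α / sinh (α L))| < Δ(α coth (α L))`.
This holds because both `y (cosh y ± 1) / sinh y` (that is, `y coth (y/2)` and `y tanh (y/2)`) are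
increasing on `(0, ∞)`: their derivatives are `(cosh y ± 1)(sinh y ∓ y) / sinh² y`.
-/

open Real Set

theorem sq_sub_le_of_sq_eq_add_sq {d e x y x' y' : ℝ} (hd : 0 ≤ d) (he : 0 ≤ e)
    (hd2 : d ^ 2 = x ^ 2 + y ^ 2) (he2 : e ^ 2 = x' ^ 2 + y' ^ 2) :
    (e - d) ^ 2 ≤ (x' - x) ^ 2 + (y' - y) ^ 2 := by
  have hcs : x * x' + y * y' ≤ d * e :=
    abs_le_of_sq_le_sq' (by nlinarith [sq_nonneg (x * y' - y * x')]) (mul_nonneg hd he) |>.2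
  nlinarith

namespace Matrix

theorem det_sub_smul_one_fin_two {R : Type*} [CommRing R] (M : Matrix (Fin 2) (Fin 2) R) (μ : R) :
    (M - μ • 1).det = μ ^ 2 - M.trace * μ + M.det := by
  simp only [det_fin_two, trace_fin_two, sub_apply, smul_apply, smul_eq_mul, one_apply_eq,
    one_apply_ne zero_ne_one, one_apply_ne one_ne_zero, mul_one, mul_zero, sub_zero]
  ring

theorem add_eq_trace_and_mul_eq_det_fin_two {R : Type*} [CommRing R] [IsDomain R]
    {M : Matrix (Fin 2) (Fin 2) R} {μ₁ μ₂ : R} (hne : μ₁ ≠ μ₂)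
    (h₁ : (M - μ₁ • 1).det = 0) (h₂ : (M - μ₂ • 1).det = 0) :
    μ₁ + μ₂ = M.trace ∧ μ₁ * μ₂ = M.det := by
  rw [det_sub_smul_one_fin_two] at h₁ h₂
  have hsum : μ₁ + μ₂ = M.trace := by
    have h : (μ₁ - μ₂) * (μ₁ + μ₂ - M.trace) = 0 := by linear_combination h₁ - h₂
    exact sub_eq_zero.mp ((mul_eq_zero.mp h).resolve_left (sub_ne_zero.mpr hne))
  exact ⟨hsum, by linear_combination μ₁ * hsum - h₁⟩

theorem eigenvalues_lt_of_det_sub_pos_fin_two {M N : Matrix (Fin 2) (Fin 2) ℝ}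
    (hM : M.IsSymm) (hN : N.IsSymm) (h₀₀ : 0 < (N - M) 0 0) (hdet : 0 < (N - M).det)
    {μ₁ μ₂ ν₁ ν₂ : ℝ} (hμ : μ₁ < μ₂ ∧ (M - μ₁ • 1).det = 0 ∧ (M - μ₂ • 1).det = 0)
    (hν : ν₁ < ν₂ ∧ (N - ν₁ • 1).det = 0 ∧ (N - ν₂ • 1).det = 0) :
    μ₁ < ν₁ ∧ μ₂ < ν₂ := by
  obtain ⟨hμ, hμ₁, hμ₂⟩ := hμ
  obtain ⟨hν, hν₁, hν₂⟩ := hν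
  obtain ⟨hμt, hμd⟩ := add_eq_trace_and_mul_eq_det_fin_two hμ.ne hμ₁ hμ₂
  obtain ⟨hνt, hνd⟩ := add_eq_trace_and_mul_eq_det_fin_two hν.ne hν₁ hν₂
  have hM₁₀ : M 1 0 = M 0 1 := hM.apply 0 1
  have hN₁₀ : N 1 0 = N 0 1 := hN.apply 0 1
  rw [trace_fin_two] at hμt hνt
  rw [det_fin_two] at hμd hνd hdet
  simp only [sub_apply, hM₁₀, hN₁₀] at h₀₀ hdet
  have hμsq : (μ₂ - μ₁) ^ 2 = (M 0 0 - M 1 1) ^ 2 + (2 * M 0 1) ^ 2 := by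
    linear_combination (μ₁ + μ₂ + M 0 0 + M 1 1) * hμt - 4 * hμd + 4 * M 0 1 * hM₁₀
  have hνsq : (ν₂ - ν₁) ^ 2 = (N 0 0 - N 1 1) ^ 2 + (2 * N 0 1) ^ 2 := by
    linear_combination (ν₁ + ν₂ + N 0 0 + N 1 1) * hνt - 4 * hνd + 4 * N 0 1 * hN₁₀
  have htri := sq_sub_le_of_sq_eq_add_sq (sub_nonneg.2 hμ.le) (sub_nonneg.2 hν.le) hμsq hνsq
  have h₁₁ : 0 < N 1 1 - M 1 1 := by nlinarith [sq_nonneg (N 0 1 - M 0 1)]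
  have hgap : ((ν₂ - ν₁) - (μ₂ - μ₁)) ^ 2 < (ν₁ + ν₂ - (μ₁ + μ₂)) ^ 2 := by
    rw [hμt, hνt]
    nlinarith
  have := abs_lt_of_sq_lt_sq' hgap (by linarith)
  constructor <;> linarith

end Matrix

theorem strictMonoOn_mul_cosh_add_div_sinh {s : ℝ} (hs : s ^ 2 = 1) :
    StrictMonoOn (fun y => y * (cosh y + s) / sinh y) (Ioi 0) := by
  have hderiv : ∀ y ∈ Ioi (0 : ℝ), HasDerivAt (fun y => y * (cosh y + s) / sinh y)
      ((cosh y + s) * (sinh y - s * y) / sinh y ^ 2) y := by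
    intro y hy
    refine (((hasDerivAt_id' y).mul ((hasDerivAt_cosh y).add_const s)).div (hasDerivAt_sinh y)
      (sinh_pos_iff.mpr hy).ne').congr_deriv ?_
    simp only [Pi.mul_apply]
    congr 1
    linear_combination y * hs - y * cosh_sq_sub_sinh_sq y
  rw [← interior_Ioi] at hderiv
  refine strictMonoOn_of_hasDerivWithinAt_pos (convex_Ioi 0)
    (fun y hy => (hderiv y (by rwa [interior_Ioi])).continuousAt.continuousWithinAt)
    (fun y hy => (hderiv y hy).hasDerivWithinAt) fun y hy => ?_
  rw [interior_Ioi] at hy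
  obtain ⟨hs₁, hs₂⟩ := abs_le.mp ((sq_le_one_iff_abs_le_one s).mp hs.le)
  have : 1 < cosh y := one_lt_cosh.mpr hy.ne'
  have : y < sinh y := self_lt_sinh_iff.mpr hy
  have : 0 < cosh y + s := by linarith
  have : 0 < sinh y - s * y := by nlinarith [mem_Ioi.mp hy]
  have : 0 < sinh y := sinh_pos_iff.mpr hy
  positivity

theorem abs_sub_div_sinh_lt_sub_mul_coth {L a₁ a₂ : ℝ} (hL : 0 < L) (h₀ : 0 < a₁) (h : a₁ < a₂) :
    |a₂ / sinh (a₂ * L) - a₁ / sinh (a₁ * L)| <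
      a₂ * (cosh (a₂ * L) / sinh (a₂ * L)) - a₁ * (cosh (a₁ * L) / sinh (a₁ * L)) := by
  have hcomb : ∀ s : ℝ, s ^ 2 = 1 →
      a₁ * (cosh (a₁ * L) / sinh (a₁ * L)) + s * (a₁ / sinh (a₁ * L)) <
        a₂ * (cosh (a₂ * L) / sinh (a₂ * L)) + s * (a₂ / sinh (a₂ * L)) := by
    intro s hs
    have hmono := strictMonoOn_mul_cosh_add_div_sinh hs (mul_pos h₀ hL)
      (mul_pos (h₀.trans h) hL) (mul_lt_mul_of_pos_right h hL)
    have hscale : ∀ a, a * L * (cosh (a * L) + s) / sinh (a * L) =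
        L * (a * (cosh (a * L) / sinh (a * L)) + s * (a / sinh (a * L))) := fun a => by ring
    simp only [hscale] at hmono
    exact lt_of_mul_lt_mul_left hmono hL.le
  have hplus := hcomb 1 (one_pow 2)
  have hminus := hcomb (-1) (by norm_num)
  exact abs_sub_lt_iff.mpr ⟨by linarith, by linarith⟩

/-- The `k`-dependent part of `M̃_{λ,k}` as a function of `α = n/2 + k - 1`, with `L = -log λ`. -/
noncomputable def hyperbolicMatrix (l L a : ℝ) : Matrix (Fin 2) (Fin 2) ℝ :=
  !![(1 / l) * (a * (cosh (a * L) / sinh (a * L))), -a / (√l * sinh (a * L));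
     -a / (√l * sinh (a * L)), a * (cosh (a * L) / sinh (a * L))]

theorem hyperbolicMatrix_isSymm (l L a : ℝ) : (hyperbolicMatrix l L a).IsSymm := by
  ext i j
  fin_cases i <;> fin_cases j <;> rfl

theorem hyperbolicMatrix_sub_minors_pos {l L a₁ a₂ : ℝ} (hl : 0 < l) (hL : 0 < L) (h₀ : 0 < a₁)
    (h : a₁ < a₂) :
    0 < (hyperbolicMatrix l L a₂ - hyperbolicMatrix l L a₁) 0 0 ∧
      0 < (hyperbolicMatrix l L a₂ - hyperbolicMatrix l L a₁).det := by
  have habs := abs_sub_div_sinh_lt_sub_mul_coth hL h₀ h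
  set x := a₂ * (cosh (a₂ * L) / sinh (a₂ * L)) - a₁ * (cosh (a₁ * L) / sinh (a₁ * L))
  set z := a₂ / sinh (a₂ * L) - a₁ / sinh (a₁ * L)
  have hx : 0 < x := (abs_nonneg z).trans_lt habs
  have h₀₀ : (hyperbolicMatrix l L a₂ - hyperbolicMatrix l L a₁) 0 0 = x / l := by
    simp only [hyperbolicMatrix, Matrix.sub_apply, Matrix.of_apply, Matrix.cons_val',
      Matrix.cons_val_zero, Matrix.cons_val_fin_one, x]
    ring
  have h₀₁ : (hyperbolicMatrix l L a₂ - hyperbolicMatrix l L a₁) 0 1 = -z / √l := by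
    simp only [hyperbolicMatrix, Matrix.sub_apply, Matrix.of_apply, Matrix.cons_val',
      Matrix.cons_val_zero, Matrix.cons_val_one, Matrix.cons_val_fin_one, z]
    ring
  have h₁₀ : (hyperbolicMatrix l L a₂ - hyperbolicMatrix l L a₁) 1 0 = -z / √l := h₀₁
  have h₁₁ : (hyperbolicMatrix l L a₂ - hyperbolicMatrix l L a₁) 1 1 = x := by
    simp only [hyperbolicMatrix, Matrix.sub_apply, Matrix.of_apply, Matrix.cons_val',
      Matrix.cons_val_one, Matrix.cons_val_fin_one, x]
  have hdet : (hyperbolicMatrix l L a₂ - hyperbolicMatrix l L a₁).det = (x ^ 2 - z ^ 2) / l := by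
    rw [Matrix.det_fin_two, h₀₀, h₀₁, h₁₀, h₁₁, neg_div, neg_mul_neg, div_mul_div_comm,
      mul_self_sqrt hl.le]
    ring
  rw [h₀₀, hdet]
  exact ⟨div_pos hx hl, div_pos (by nlinarith [sq_abs z, abs_nonneg z]) hl⟩

theorem stmt14 (n : ℕ) (hn : 2 ≤ n) (l : ℝ) (hl : l ∈ Set.Ioo (0:ℝ) 1)
    (M : ℝ → Matrix (Fin 2) (Fin 2) ℝ)
    (hM : ∀ k : ℝ, M k =
      !![(1/l) * ((n/2+k-1) * (Real.cosh (-(n/2+k-1)*Real.log l) / Real.sinh (-(n/2+k-1)*Real.log l)) - n/2),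
         -(n/2+k-1)/(Real.sqrt l * Real.sinh (-(n/2+k-1)*Real.log l));
         -(n/2+k-1)/(Real.sqrt l * Real.sinh (-(n/2+k-1)*Real.log l)),
         (n/2+k-1) * (Real.cosh (-(n/2+k-1)*Real.log l) / Real.sinh (-(n/2+k-1)*Real.log l)) + n/2]
        - (n*(1+l^(n-1))/(1-l^n)) • 1)
    (μ₁ μ₂ : ℝ → ℝ)
    (hμ : ∀ k ∈ Set.Ioi (0:ℝ), μ₁ k < μ₂ k ∧
        (M k - μ₁ k • 1).det = 0 ∧ (M k - μ₂ k • 1).det = 0) :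
    StrictMonoOn μ₁ (Set.Ioi 0) ∧ StrictMonoOn μ₂ (Set.Ioi 0) := by
  obtain ⟨hl₀, hl₁⟩ := hl
  have hL : 0 < -Real.log l := neg_pos.mpr (Real.log_neg hl₀ hl₁)
  set C : Matrix (Fin 2) (Fin 2) ℝ := Matrix.diagonal
    ![-(n / 2) / l - n * (1 + l ^ (n - 1)) / (1 - l ^ n),
      n / 2 - n * (1 + l ^ (n - 1)) / (1 - l ^ n)]
  have hMK : ∀ k, M k = hyperbolicMatrix l (-Real.log l) (n / 2 + k - 1) + C := by
    intro k
    simp only [hM k, neg_mul_comm _ (Real.log l)]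
    ext i j
    fin_cases i <;> fin_cases j <;> simp [hyperbolicMatrix, C] <;> ring
  have hsymm : ∀ k, (M k).IsSymm := fun k =>
    hMK k ▸ (hyperbolicMatrix_isSymm _ _ _).add (Matrix.isSymm_diagonal _)
  have hmono : ∀ k₁ ∈ Ioi (0 : ℝ), ∀ k₂ ∈ Ioi (0 : ℝ), k₁ < k₂ →
      μ₁ k₁ < μ₁ k₂ ∧ μ₂ k₁ < μ₂ k₂ := by
    intro k₁ hk₁ k₂ hk₂ hk
    have hα : (0 : ℝ) < n / 2 + k₁ - 1 := by
      have : (2 : ℝ) ≤ n := by exact_mod_cast hn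
      linarith [mem_Ioi.mp hk₁]
    have hinc := hyperbolicMatrix_sub_minors_pos (a₂ := n / 2 + k₂ - 1) hl₀ hL hα (by linarith)
    rw [← add_sub_add_right_eq_sub _ _ C, ← hMK, ← hMK] at hinc
    exact Matrix.eigenvalues_lt_of_det_sub_pos_fin_two (hsymm k₁) (hsymm k₂) hinc.1 hinc.2
      (hμ k₁ hk₁) (hμ k₂ hk₂)
  exact ⟨fun k₁ hk₁ k₂ hk₂ hk => (hmono k₁ hk₁ k₂ hk₂ hk).1,
    fun k₁ hk₁ k₂ hk₂ hk => (hmono k₁ hk₁ k₂ hk₂ hk).2⟩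
end
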